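/- Let μ, θ > 0 with firing-rate function S, let A, M ∈ ℝ and B > 0, and let W₄ : ℝ² → ℝ be integrable with Fourier transform ŵ₄(k) = ∫_{ℝ²} W₄(x) e^{-i⟨k,x⟩} dx equal to A/(B + (‖k‖² − M)²) for all k. If u : ℝ² → ℝ is a Schwartz function that is a stationary solution of the integral neural field model with kernel W₄ and no input, i.e. u(x) = ∫_{ℝ²} W₄(x − y) S(u(y)) dy for all x ∈ ℝ², then u satisfies the stationary fourth-order PDE B u + (M + Δ)² u = A (S ∘ u) everywhere on ℝ², where (M + Δ)² u = M² u + 2M Δu + Δ(Δu). -/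

import Mathlib

/-!
Complexify `u` and take Fourier transforms. The stationarity equation says that `u` is the
convolution of `W₄` with `S ∘ u`, which is integrable because `S` is Lipschitz and vanishes at
`0`; hence `𝓕 u = 𝓕 W₄ · 𝓕 (S ∘ u)`. With `𝓕 f ξ = ∫ e^{-2πi⟨x, ξ⟩} f x dx` the Laplacian acts
as multiplication by `-‖2πξ‖²`, so `B + (M + Δ)²` acts as multiplication by
`B + (‖2πξ‖² - M)²`, which is exactly the positive denominator of `ŵ₄(2πξ) = 𝓕 W₄ ξ`. Thus
`B u + (M + Δ)² u` and `A (S ∘ u)` have the same Fourier transform; both are continuous and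
integrable and the common transform is integrable (it is that of a Schwartz function), so
Fourier inversion identifies them pointwise.
-/

open MeasureTheory

/-- The Euclidean Laplacian `Δg = ∂²g/∂x₁² + ∂²g/∂x₂²` on `ℝ²`, expressed via iterated
Fréchet derivatives in the coordinate directions. -/
noncomputable def lap (g : EuclideanSpace ℝ (Fin 2) → ℝ) :
    EuclideanSpace ℝ (Fin 2) → ℝ :=
  fun x => ∑ i : Fin 2,
    fderiv ℝ (fun y => fderiv ℝ g y (EuclideanSpace.single i (1 : ℝ))) x
      (EuclideanSpace.single i (1 : ℝ))

open Real Laplacian FourierTransform Convolution SchwartzMap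

theorem Real.lipschitzWith_sigmoid : LipschitzWith 1 sigmoid := by
  refine lipschitzWith_of_nnnorm_deriv_le differentiable_sigmoid fun x => ?_
  rw [← NNReal.coe_le_coe, coe_nnnorm, deriv_sigmoid, Real.norm_eq_abs, NNReal.coe_one, abs_le]
  constructor <;> nlinarith [sigmoid_pos x, sigmoid_lt_one x]

theorem lipschitzWith_firingRate (μ θ : ℝ) :
    LipschitzWith ‖μ‖₊ fun v => 1 / (1 + exp (-μ * v + θ)) - 1 / (1 + exp θ) := by
  have hσ (v : ℝ) : 1 / (1 + exp (-μ * v + θ)) = sigmoid (μ * v - θ) := by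
    rw [one_div, sigmoid_def]
    ring_nf
  refine LipschitzWith.of_dist_le_mul fun a b => ?_
  calc dist (1 / (1 + exp (-μ * a + θ)) - 1 / (1 + exp θ))
        (1 / (1 + exp (-μ * b + θ)) - 1 / (1 + exp θ))
      = dist (sigmoid (μ * a - θ)) (sigmoid (μ * b - θ)) := by rw [hσ, hσ, dist_sub_right]
    _ ≤ dist (μ * a - θ) (μ * b - θ) :=
        (lipschitzWith_sigmoid.dist_le_mul _ _).trans_eq (one_mul _)
    _ = ‖μ‖₊ * dist a b := by simp [Real.dist_eq, ← mul_sub, abs_mul]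

section Fourier

variable {E : Type*} [NormedAddCommGroup E] [InnerProductSpace ℝ E] [FiniteDimensional ℝ E]
  [MeasurableSpace E] [BorelSpace E]

theorem fourier_apply_eq_integral_exp_inner (f : E → ℂ) (ξ : E) :
    𝓕 f ξ = ∫ x, f x * Complex.exp (-Complex.I * ((inner ℝ ((2 * π) • ξ) x : ℝ) : ℂ)) := by
  rw [Real.fourier_eq']
  congr 1 with x
  rw [smul_eq_mul, mul_comm, real_inner_smul_left, real_inner_comm]
  congr 2
  push_cast
  ring

variable {F : Type*} [NormedAddCommGroup F] [NormedSpace ℂ F] [CompleteSpace F]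

theorem Continuous.eq_of_fourier_eq {f g : E → F} (hf : Continuous f) (hg : Continuous g)
    (hfi : Integrable f) (hgi : Integrable g) (hFf : Integrable (𝓕 f)) (h : 𝓕 f = 𝓕 g) :
    f = g := by
  rw [← hf.fourierInv_fourier_eq hfi hFf, ← hg.fourierInv_fourier_eq hgi (h ▸ hFf), h]

theorem SchwartzMap.fourier_laplacian_apply (f : 𝓢(E, F)) (ξ : E) :
    𝓕 (Δ f) ξ = (-‖(2 * π) • ξ‖ ^ 2) • 𝓕 f ξ := by
  rw [laplacian_eq_fourierMultiplierCLM, fourier_smul, fourierMultiplierCLM_apply,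
    FourierTransform.fourier_fourierInv_eq, smul_apply, smulLeftCLM_apply_apply (by fun_prop),
    smul_smul, norm_smul]
  congr 1
  simp [abs_of_pos pi_pos]
  ring

end Fourier

theorem SchwartzMap.laplacian_postcompCLM {E F G : Type*} [NormedAddCommGroup E]
    [InnerProductSpace ℝ E] [FiniteDimensional ℝ E] [NormedAddCommGroup F] [NormedSpace ℝ F]
    [NormedAddCommGroup G] [NormedSpace ℝ G] (L : F →L[ℝ] G) (f : 𝓢(E, F)) :
    Δ (f.postcompCLM L) = (Δ f).postcompCLM L := by
  ext x
  rw [laplacian_apply, postcompCLM_apply, laplacian_apply]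
  exact (f.smooth 2).contDiffAt.laplacian_CLM_comp_left

section FourthOrder

variable {E : Type*} [NormedAddCommGroup E]

/-- The operator `B + (M + Δ)²` on Schwartz functions. -/
noncomputable def fourthOrderOp [InnerProductSpace ℝ E] [FiniteDimensional ℝ E]
    {F : Type*} [NormedAddCommGroup F] [NormedSpace ℝ F] (B M : ℝ) (f : 𝓢(E, F)) : 𝓢(E, F) :=
  B • f + (M ^ 2 • f + (2 * M) • Δ f + Δ (Δ f))

/-- The symbol of `B + (M + Δ)²` in the angular frequency `k`, for which `Δ ↦ -‖k‖²`. -/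
def fourthOrderSymbol (B M : ℝ) (k : E) : ℝ := B + (‖k‖ ^ 2 - M) ^ 2

theorem fourthOrderSymbol_pos {B : ℝ} (hB : 0 < B) (M : ℝ) (k : E) :
    0 < fourthOrderSymbol B M k := by
  unfold fourthOrderSymbol
  positivity

variable [InnerProductSpace ℝ E] [FiniteDimensional ℝ E]

theorem fourthOrderOp_postcompCLM {F G : Type*} [NormedAddCommGroup F] [NormedSpace ℝ F]
    [NormedAddCommGroup G] [NormedSpace ℝ G] (B M : ℝ) (L : F →L[ℝ] G) (f : 𝓢(E, F)) :
    fourthOrderOp B M (f.postcompCLM L) = (fourthOrderOp B M f).postcompCLM L := by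
  simp only [fourthOrderOp, map_add, map_smul, laplacian_postcompCLM]

variable [MeasurableSpace E] [BorelSpace E]

theorem fourier_fourthOrderOp_apply {F : Type*} [NormedAddCommGroup F] [NormedSpace ℂ F]
    [CompleteSpace F] (B M : ℝ) (f : 𝓢(E, F)) (ξ : E) :
    𝓕 (fourthOrderOp B M f) ξ = fourthOrderSymbol B M ((2 * π) • ξ) • 𝓕 f ξ := by
  simp only [fourthOrderOp, FourierTransform.fourier_add, fourier_smul, add_apply, smul_apply,
    fourier_laplacian_apply, smul_smul, ← add_smul, fourthOrderSymbol]
  congr 1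
  ring

theorem fourthOrderOp_eq_smul_of_eq_convolution {A B M : ℝ} (hB : 0 < B) {W g : E → ℂ}
    (hW : Integrable W) (hg : Integrable g) (hgc : Continuous g)
    (hŴ : ∀ ξ, 𝓕 W ξ = ((A / fourthOrderSymbol B M ((2 * π) • ξ) : ℝ) : ℂ))
    (f : 𝓢(E, ℂ)) (hf : ⇑f = g ⋆[ContinuousLinearMap.mul ℂ ℂ] W) :
    ⇑(fourthOrderOp B M f) = (A : ℂ) • g := by
  refine (fourthOrderOp B M f).continuous.eq_of_fourier_eq (hgc.const_smul _)
    (fourthOrderOp B M f).integrable (hg.smul _) (𝓕 (fourthOrderOp B M f)).integrable ?_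
  ext ξ
  have hP : (fourthOrderSymbol B M ((2 * π) • ξ) : ℂ) ≠ 0 :=
    Complex.ofReal_ne_zero.2 (fourthOrderSymbol_pos hB M _).ne'
  have hA : 𝓕 ((A : ℂ) • g) ξ = A * 𝓕 g ξ :=
    congrFun (VectorFourier.fourierIntegral_const_smul _ _ _ g (A : ℂ)) ξ
  rw [← fourier_coe, fourier_fourthOrderOp_apply, fourier_coe, hf,
    Real.fourier_mul_convolution_eq hg hW, hŴ, hA, Complex.real_smul]
  push_cast
  field_simp

theorem fourthOrderOp_eq_smul_of_eq_integral {A B M : ℝ} (hB : 0 < B) {W g : E → ℝ}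
    (hW : Integrable W) (hg : Integrable g) (hgc : Continuous g)
    (hŴ : ∀ k, ∫ x, (W x : ℂ) * Complex.exp (-Complex.I * ((inner ℝ k x : ℝ) : ℂ)) =
      ((A / fourthOrderSymbol B M k : ℝ) : ℂ))
    (u : 𝓢(E, ℝ)) (hu : ∀ x, u x = ∫ y, W (x - y) * g y) :
    ⇑(fourthOrderOp B M u) = A • g := by
  have hconv : ⇑(u.postcompCLM Complex.ofRealCLM) =
      (fun y => (g y : ℂ)) ⋆[ContinuousLinearMap.mul ℂ ℂ] fun y => (W y : ℂ) := by
    funext x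
    simp only [postcompCLM_apply, Complex.ofRealCLM_apply, hu, convolution_def,
      ContinuousLinearMap.mul_apply', ← Complex.ofReal_mul, mul_comm (g _)]
    exact integral_complex_ofReal.symm
  have hC := fourthOrderOp_eq_smul_of_eq_convolution (W := fun y => (W y : ℂ))
    (g := fun y => (g y : ℂ)) hB hW.ofReal hg.ofReal
    (Complex.continuous_ofReal.comp hgc)
    (fun ξ => (fourier_apply_eq_integral_exp_inner _ ξ).trans (hŴ _)) _ hconv
  funext x
  have hx := congrFun hC x
  rw [fourthOrderOp_postcompCLM, postcompCLM_apply, Complex.ofRealCLM_apply] at hx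
  rw [Pi.smul_apply, smul_eq_mul, ← Complex.ofReal_mul, Complex.ofReal_inj] at hx
  exact hx

end FourthOrder

theorem lap_eq_laplacian {g : EuclideanSpace ℝ (Fin 2) → ℝ} (hg : ContDiff ℝ 2 g) :
    lap g = Δ g := by
  rw [InnerProductSpace.laplacian_eq_iteratedFDeriv_orthonormalBasis g
    (EuclideanSpace.basisFun (Fin 2) ℝ)]
  funext x
  refine Finset.sum_congr rfl fun i _ => ?_
  have hd : Differentiable ℝ (fderiv ℝ g) :=
    (hg.fderiv_right (m := 1) le_rfl).differentiable one_ne_zero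
  rw [iteratedFDeriv_two_apply, fderiv_clm_apply (hd x) (differentiableAt_const _)]
  simp

theorem SchwartzMap.lap_eq_laplacian (f : 𝓢(EuclideanSpace ℝ (Fin 2), ℝ)) :
    lap f = ⇑(Δ f : 𝓢(EuclideanSpace ℝ (Fin 2), ℝ)) := by
  rw [_root_.lap_eq_laplacian (f.smooth 2)]
  exact funext fun x => (laplacian_apply f x).symm

theorem stmt15_general (μ θ : ℝ)
    (S : ℝ → ℝ)
    (hS : ∀ v, S v = 1 / (1 + Real.exp (-μ * v + θ)) - 1 / (1 + Real.exp θ))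
    (A M B : ℝ) (hB : 0 < B)
    (W₄ : EuclideanSpace ℝ (Fin 2) → ℝ) (hW : Integrable W₄)
    (hwHat : ∀ k : EuclideanSpace ℝ (Fin 2),
      (∫ x, (W₄ x : ℂ) * Complex.exp (-Complex.I * ((inner ℝ k x : ℝ) : ℂ))) =
        ((A / (B + (‖k‖ ^ 2 - M) ^ 2) : ℝ) : ℂ))
    (u : SchwartzMap (EuclideanSpace ℝ (Fin 2)) ℝ)
    (heq : ∀ x, u x = ∫ y, W₄ (x - y) * S (u y)) :
    ∀ x, B * u x + (M ^ 2 * u x + 2 * M * lap (⇑u) x + lap (lap (⇑u)) x) =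
      A * S (u x) := by
  have hS_lip : LipschitzWith ‖μ‖₊ S := funext hS ▸ lipschitzWith_firingRate μ θ
  have hS_zero : S 0 = 0 := by simp [hS]
  have hSu : Integrable (S ∘ u) :=
    memLp_one_iff_integrable.1 (hS_lip.comp_memLp hS_zero (u.memLp 1))
  have hop := fourthOrderOp_eq_smul_of_eq_integral hB hW hSu (hS_lip.continuous.comp u.continuous)
    hwHat u heq
  intro x
  simpa [fourthOrderOp, SchwartzMap.lap_eq_laplacian] using congrFun hop x

/-- Let `S` be the firing-rate function (`μ, θ > 0`) and `W₄` an integrable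
kernel with Fourier transform `A/(B + (‖k‖² − M)²)` (`B > 0`). If a Schwartz function `u`
is a stationary solution of the integral neural field model with kernel `W₄` and no
input, i.e. `u(x) = ∫ W₄(x−y) S(u(y)) dy`, then `u` satisfies the stationary
fourth-order PDE `B u + (M + Δ)² u = A (S ∘ u)` everywhere on `ℝ²`, where
`(M + Δ)² u = M² u + 2M Δu + Δ(Δu)`. -/
theorem stmt15 (μ θ : ℝ) (hμ : 0 < μ) (hθ : 0 < θ)
    (S : ℝ → ℝ)
    (hS : ∀ v, S v = 1 / (1 + Real.exp (-μ * v + θ)) - 1 / (1 + Real.exp θ))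
    (A M B : ℝ) (hB : 0 < B)
    (W₄ : EuclideanSpace ℝ (Fin 2) → ℝ) (hW : Integrable W₄)
    (hwHat : ∀ k : EuclideanSpace ℝ (Fin 2),
      (∫ x, (W₄ x : ℂ) * Complex.exp (-Complex.I * ((inner ℝ k x : ℝ) : ℂ))) =
        ((A / (B + (‖k‖ ^ 2 - M) ^ 2) : ℝ) : ℂ))
    (u : SchwartzMap (EuclideanSpace ℝ (Fin 2)) ℝ)
    (heq : ∀ x, u x = ∫ y, W₄ (x - y) * S (u y)) :
    ∀ x, B * u x + (M ^ 2 * u x + 2 * M * lap (⇑u) x + lap (lap (⇑u)) x) =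
      A * S (u x) :=
  stmt15_general μ θ S hS A M B hB W₄ hW hwHat u heq
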